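/- Suppose each tie set 𝓔_j has Lebesgue measure zero, j = 1,…,n. Then the optimal domains D_1*,…,D_n* satisfy the admissibility requirements: they are pairwise disjoint, and ∫_{∪_{k=1}^n D_k*} P_ℓ(r) dr = 1 for every ℓ ∈ {1,…,n}. -/

import Mathlib

/-!
Two distinct indices cannot both win strictly, so the optimal domains are disjoint. A point
of `Ω` outside all of them has a maximizer of `q j * P j r` that is tied, i.e. lies in a tie
set; hence the union of the optimal domains agrees with `Ω` up to a null set, and integrating
`P ℓ` over it gives `∫ r in Ω, P ℓ r = 1`.
-/

open MeasureTheory Function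

section Argmax

variable {ι α : Type*} (f : ι → α → ℝ) (s : Set α)

def strictArgmaxSet (j : ι) : Set α :=
  {r | r ∈ s ∧ ∀ k, k ≠ j → f k r < f j r}

def tieSet (j : ι) : Set α :=
  ⋃ (k : ι) (_ : k ≠ j), {r | r ∈ s ∧ f k r = f j r ∧ ∀ i, f i r ≤ f j r}

theorem strictArgmaxSet_subset (j : ι) : strictArgmaxSet f s j ⊆ s :=
  fun _ hr => hr.1

theorem pairwise_disjoint_strictArgmaxSet : Pairwise (Disjoint on strictArgmaxSet f s) :=
  fun j k hjk => Set.disjoint_left.mpr fun _ hj hk =>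
    lt_asymm (hj.2 k hjk.symm) (hk.2 j hjk)

theorem diff_iUnion_strictArgmaxSet_subset [Finite ι] [Nonempty ι] :
    s \ ⋃ j, strictArgmaxSet f s j ⊆ ⋃ j, tieSet f s j := by
  rintro r ⟨hrs, hr⟩
  obtain ⟨j, hj⟩ := Finite.exists_max fun i => f i r
  have hnot : r ∉ strictArgmaxSet f s j := fun h => hr (Set.mem_iUnion.mpr ⟨j, h⟩)
  simp only [strictArgmaxSet, Set.mem_ofPred_eq, not_and, not_forall, not_lt] at hnot
  obtain ⟨k, hkj, hjk⟩ := hnot hrs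
  exact Set.mem_iUnion.mpr ⟨j, Set.mem_biUnion (x := k) hkj
    ⟨hrs, le_antisymm (hj k) hjk, hj⟩⟩

theorem iUnion_strictArgmaxSet_ae_eq [Finite ι] [Nonempty ι] [MeasurableSpace α]
    {μ : Measure α} (hnull : ∀ j, μ (tieSet f s j) = 0) :
    (⋃ j, strictArgmaxSet f s j) =ᵐ[μ] s := by
  refine ae_eq_set.mpr ⟨?_, ?_⟩
  · rw [Set.sdiff_eq_empty.mpr (Set.iUnion_subset (strictArgmaxSet_subset f s)),
      measure_empty]
  · exact measure_mono_null (diff_iUnion_strictArgmaxSet_subset f s)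
      (measure_iUnion_null hnull)

end Argmax

theorem optimal_domains_admissible_general
    (n m : ℕ)
    (Ω : Set (Fin m → ℝ))
    (P : Fin n → (Fin m → ℝ) → ℝ)
    (hPone : ∀ j, ∫ r in Ω, P j r = 1)
    (q : Fin n → ℝ)
    (Dstar : Fin n → Set (Fin m → ℝ))
    (hDstar : ∀ j, Dstar j =
      {r | r ∈ Ω ∧ ∀ k, k ≠ j → q k * P k r < q j * P j r})
    (E : Fin n → Set (Fin m → ℝ))
    (hE : ∀ j, E j = ⋃ (k : Fin n) (_ : k ≠ j),
      {r | r ∈ Ω ∧ q k * P k r = q j * P j r ∧ ∀ i, q i * P i r ≤ q j * P j r})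
    (hEnull : ∀ j, volume (E j) = 0) :
    (∀ j k, j ≠ k → Dstar j ∩ Dstar k = ∅) ∧
      (∀ ℓ, ∫ r in ⋃ k, Dstar k, P ℓ r = 1) := by
  obtain rfl : Dstar = strictArgmaxSet (fun j r => q j * P j r) Ω := funext hDstar
  obtain rfl : E = tieSet (fun j r => q j * P j r) Ω := funext hE
  refine ⟨fun j k hjk => (pairwise_disjoint_strictArgmaxSet _ _ hjk).inter_eq, fun ℓ => ?_⟩
  have : Nonempty (Fin n) := ⟨ℓ⟩
  rw [setIntegral_congr_set (iUnion_strictArgmaxSet_ae_eq _ _ hEnull)]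
  exact hPone ℓ

/-- If each tie set has Lebesgue measure zero, the optimal domains are
pairwise disjoint and their union carries full mass for each class density. -/
theorem optimal_domains_admissible
    (n m : ℕ) (hn : 2 ≤ n) (hm : 1 ≤ m)
    (Ω : Set (Fin m → ℝ)) (hΩ : MeasurableSet Ω)
    (P : Fin n → (Fin m → ℝ) → ℝ)
    (hPmeas : ∀ j, Measurable (P j))
    (hPnonneg : ∀ j r, 0 ≤ P j r)
    (hPsupp : ∀ j r, r ∉ Ω → P j r = 0)
    (hPone : ∀ j, ∫ r in Ω, P j r = 1)
    (q : Fin n → ℝ) (hq : ∀ j, 0 ≤ q j) (hqsum : ∑ j, q j = 1)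
    (Dstar : Fin n → Set (Fin m → ℝ))
    (hDstar : ∀ j, Dstar j =
      {r | r ∈ Ω ∧ ∀ k, k ≠ j → q k * P k r < q j * P j r})
    (E : Fin n → Set (Fin m → ℝ))
    (hE : ∀ j, E j = ⋃ (k : Fin n) (_ : k ≠ j),
      {r | r ∈ Ω ∧ q k * P k r = q j * P j r ∧ ∀ i, q i * P i r ≤ q j * P j r})
    (hEnull : ∀ j, volume (E j) = 0) :
    (∀ j k, j ≠ k → Dstar j ∩ Dstar k = ∅) ∧
      (∀ ℓ, ∫ r in ⋃ k, Dstar k, P ℓ r = 1) :=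
  optimal_domains_admissible_general n m Ω P hPone q Dstar hDstar E hE hEnull
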